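/- Let n ≥ 1 and let P ⊆ SL(n+2, ℝ) be the subgroup of block upper-triangular matrices preserving the subspace ℝ² ⊆ ℝ^{n+2} spanned by the first two standard basis vectors. Then the orbits of the natural action of P on ℝ^{n+2} are exactly: {0}, ℝ² \ {0}, and {(v,w) ∈ ℝ² ⊕ ℝⁿ : w ≠ 0}. -/
import Mathlib

/-- We say that `v ∈ ℝ^{n+2}` lies in the distinguished subspace `ℝ²` (spanned by the first
two standard basis vectors) if all its components of index `≥ 2` vanish. -/
def InR2 {n : ℕ} (v : Fin (n + 2) → ℝ) : Prop := ∀ i : Fin (n + 2), 2 ≤ (i : ℕ) → v i = 0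

namespace ParabolicAux
open Matrix

variable {n : ℕ}

/-- The index identification `Fin 2 ⊕ Fin n ≃ Fin (n+2)`. -/
def emb (n : ℕ) : Fin 2 ⊕ Fin n ≃ Fin (n + 2) :=
  finSumFinEquiv.trans (finCongr (Nat.add_comm 2 n))

lemma emb_inl (j : Fin 2) : ((emb n (Sum.inl j) : Fin (n+2)) : ℕ) = (j : ℕ) := by
  simp [emb, finSumFinEquiv]

lemma emb_inr (k : Fin n) : ((emb n (Sum.inr k) : Fin (n+2)) : ℕ) = 2 + (k : ℕ) := by
  simp [emb, finSumFinEquiv]; omega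

lemma inR2_iff (u : Fin (n + 2) → ℝ) :
    InR2 u ↔ (u ∘ emb n ∘ Sum.inr) = 0 := by
  constructor
  · intro h
    funext k
    exact h _ (by have := emb_inr (n := n) k; simp only [Function.comp_apply]; omega)
  · intro h i hi
    have := (emb n).apply_symm_apply i
    rcases hs : (emb n).symm i with j | k
    · exfalso
      rw [hs] at this
      have h2 := emb_inl (n := n) j
      rw [this] at h2
      omega
    · rw [hs] at this
      rw [← this]
      exact congrFun h k
end ParabolicAux

namespace ParabolicAux
open Matrix

variable {n : ℕ}

/-- A block upper triangular matrix. -/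
def gMat (A : Matrix (Fin 2) (Fin 2) ℝ) (C : Matrix (Fin 2) (Fin n) ℝ)
    (D : Matrix (Fin n) (Fin n) ℝ) : Matrix (Fin (n+2)) (Fin (n+2)) ℝ :=
  (Matrix.fromBlocks A C 0 D).submatrix (emb n).symm (emb n).symm

lemma det_gMat (A : Matrix (Fin 2) (Fin 2) ℝ) (C : Matrix (Fin 2) (Fin n) ℝ)
    (D : Matrix (Fin n) (Fin n) ℝ) : (gMat A C D).det = A.det * D.det := by
  rw [gMat, ← Matrix.reindex_apply, Matrix.det_reindex_self, Matrix.det_fromBlocks_zero₂₁]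

lemma mulVec_gMat (A : Matrix (Fin 2) (Fin 2) ℝ) (C : Matrix (Fin 2) (Fin n) ℝ)
    (D : Matrix (Fin n) (Fin n) ℝ) (v : Fin (n+2) → ℝ) :
    (gMat A C D).mulVec v =
      (Sum.elim (A.mulVec (v ∘ emb n ∘ Sum.inl) + C.mulVec (v ∘ emb n ∘ Sum.inr))
        (D.mulVec (v ∘ emb n ∘ Sum.inr))) ∘ (emb n).symm := by
  rw [gMat, Matrix.submatrix_mulVec_equiv, Matrix.fromBlocks_mulVec]
  simp only [Equiv.symm_symm, Matrix.zero_mulVec, zero_add]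
  rfl

lemma mulVec_gMat_apply (A : Matrix (Fin 2) (Fin 2) ℝ) (C : Matrix (Fin 2) (Fin n) ℝ)
    (D : Matrix (Fin n) (Fin n) ℝ) (v : Fin (n+2) → ℝ) (s : Fin 2 ⊕ Fin n) :
    (gMat A C D).mulVec v (emb n s) =
      (Sum.elim (A.mulVec (v ∘ emb n ∘ Sum.inl) + C.mulVec (v ∘ emb n ∘ Sum.inr))
        (D.mulVec (v ∘ emb n ∘ Sum.inr))) s := by
  rw [mulVec_gMat]; simp

lemma gMat_mem_P (A : Matrix (Fin 2) (Fin 2) ℝ) (C : Matrix (Fin 2) (Fin n) ℝ)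
    (D : Matrix (Fin n) (Fin n) ℝ) (u : Fin (n+2) → ℝ) (hu : InR2 u) :
    InR2 ((gMat A C D).mulVec u) := by
  rw [inR2_iff] at hu ⊢
  funext k
  have := mulVec_gMat_apply A C D u (Sum.inr k)
  simp only [Function.comp_apply, Sum.elim_inr] at this ⊢
  rw [this, hu, Matrix.mulVec_zero, Pi.zero_apply]

end ParabolicAux

namespace ParabolicAux
open Matrix

/-- Auxiliary invertible matrix sending `y` (with `y k ≠ 0`) to the first basis vector. -/
noncomputable def Bdef {m : ℕ} [NeZero m] (y : Fin m → ℝ) (k : Fin m) : Matrix (Fin m) (Fin m) ℝ :=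
  Matrix.of fun i j =>
    if i = 0 then (if j = k then (y k)⁻¹ else 0)
    else if i = k then (if j = (0 : Fin m) then 1 else 0) - (y 0 / y k) * (if j = k then 1 else 0)
    else (if j = i then 1 else 0) - (y i / y k) * (if j = k then 1 else 0)

lemma Bdef_mulVec {m : ℕ} [NeZero m] (y : Fin m → ℝ) (k : Fin m) (u : Fin m → ℝ) (i : Fin m) :
    (Bdef y k).mulVec u i =
      if i = 0 then (y k)⁻¹ * u k
      else if i = k then u 0 - (y 0 / y k) * u k
      else u i - (y i / y k) * u k := by
  by_cases h0 : i = 0 <;> by_cases hk : i = k <;>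
    simp [Bdef, Matrix.mulVec, dotProduct, h0, hk, ite_mul, sub_mul, mul_ite, mul_sub,
      Finset.sum_sub_distrib, Finset.sum_ite_eq', Finset.sum_ite_eq, mul_comm]

lemma Bdef_mulVec_self {m : ℕ} [NeZero m] (y : Fin m → ℝ) (k : Fin m) (hk : y k ≠ 0) :
    (Bdef y k).mulVec y = Pi.single (0 : Fin m) 1 := by
  funext i
  rw [Bdef_mulVec]
  by_cases h0 : i = 0
  · subst h0; rw [if_pos rfl, inv_mul_cancel₀ hk, Pi.single_eq_same]
  · rw [if_neg h0, Pi.single_eq_of_ne h0]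
    by_cases hik : i = k
    · rw [if_pos hik, ← hik, div_mul_cancel₀ _ (hik ▸ hk : y i ≠ 0), sub_self]
    · rw [if_neg hik, div_mul_cancel₀ _ hk, sub_self]

lemma Bdef_isUnit {m : ℕ} [NeZero m] (y : Fin m → ℝ) (k : Fin m) (hk : y k ≠ 0) :
    IsUnit (Bdef y k).det := by
  rw [← Matrix.isUnit_iff_isUnit_det, ← Matrix.mulVec_injective_iff_isUnit]
  intro u u' h
  have hd : (Bdef y k).mulVec (u - u') = 0 := by rw [Matrix.mulVec_sub, h, sub_self]
  have hzero : u - u' = 0 := by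
    have hk0 : (u - u') k = 0 := by
      have := congrFun hd 0
      rw [Bdef_mulVec] at this
      simp only [if_pos rfl, Pi.zero_apply] at this
      exact (mul_eq_zero.mp this).resolve_left (inv_ne_zero hk)
    have h00 : (u - u') 0 = 0 := by
      by_cases hk' : k = 0
      · rw [← hk']; exact hk0
      · have := congrFun hd k
        rw [Bdef_mulVec, if_neg hk', if_pos rfl] at this
        simp only [Pi.zero_apply, hk0, mul_zero, sub_zero] at this
        exact this
    funext i
    by_cases h0 : i = 0
    · rw [h0]; exact h00
    · by_cases hik : i = k
      · rw [hik]; exact hk0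
      · have := congrFun hd i
        rw [Bdef_mulVec, if_neg h0, if_neg hik] at this
        simp only [Pi.zero_apply, hk0, mul_zero, sub_zero] at this
        exact this
  exact sub_eq_zero.mp hzero

lemma exists_isUnit_mulVec {m : ℕ} {y y' : Fin m → ℝ} (hy : y ≠ 0) (hy' : y' ≠ 0) :
    ∃ B : Matrix (Fin m) (Fin m) ℝ, IsUnit B.det ∧ B.mulVec y = y' := by
  obtain ⟨k, hk⟩ := Function.ne_iff.mp hy
  obtain ⟨k', hk'⟩ := Function.ne_iff.mp hy'
  haveI : NeZero m := ⟨k.pos.ne'⟩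
  have hB := Bdef_mulVec_self y k hk
  have hB' := Bdef_mulVec_self y' k' hk'
  have uB := Bdef_isUnit y k hk
  have uB' := Bdef_isUnit y' k' hk'
  refine ⟨(Bdef y' k')⁻¹ * Bdef y k, ?_, ?_⟩
  · rw [Matrix.det_mul, Matrix.det_nonsing_inv, Ring.inverse_eq_inv']
    exact (isUnit_iff_ne_zero.mpr (inv_ne_zero uB'.ne_zero)).mul uB
  · rw [← Matrix.mulVec_mulVec, hB, ← hB', Matrix.mulVec_mulVec,
      Matrix.nonsing_inv_mul _ uB', Matrix.one_mulVec]

end ParabolicAux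

namespace ParabolicAux
open Matrix

variable {n : ℕ}

lemma funext_emb {f g : Fin (n+2) → ℝ} (h : ∀ s, f (emb n s) = g (emb n s)) : f = g := by
  funext i
  have := h ((emb n).symm i)
  rwa [Equiv.apply_symm_apply] at this

lemma eq_zero_of_parts {v : Fin (n+2) → ℝ} (h1 : v ∘ emb n ∘ Sum.inl = 0)
    (h2 : v ∘ emb n ∘ Sum.inr = 0) : v = 0 := by
  apply funext_emb
  rintro (j | k)
  · exact congrFun h1 j
  · exact congrFun h2 k

lemma exists_mulVec_eq {m : ℕ} {y : Fin m → ℝ} (hy : y ≠ 0) (z : Fin 2 → ℝ) :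
    ∃ C : Matrix (Fin 2) (Fin m) ℝ, C.mulVec y = z := by
  obtain ⟨k, hk⟩ := Function.ne_iff.mp hy
  refine ⟨Matrix.of fun i j => if j = k then z i / y k else 0, ?_⟩
  funext i
  simp [Matrix.mulVec, dotProduct, ite_mul, Finset.sum_ite_eq', div_mul_cancel₀ _ hk]

/-- `ℝ²` as a submodule. -/
def R2sub (n : ℕ) : Submodule ℝ (Fin (n+2) → ℝ) where
  carrier := {u | InR2 u}
  add_mem' := fun ha hb i hi => by simp only [Pi.add_apply, ha i hi, hb i hi, add_zero]
  zero_mem' := fun i hi => rfl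
  smul_mem' := fun c u hu i hi => by simp only [Pi.smul_apply, hu i hi, smul_zero]

lemma mem_R2sub {u : Fin (n+2) → ℝ} : u ∈ R2sub n ↔ InR2 u := Iff.rfl

lemma inv_mem_P (g : Matrix.SpecialLinearGroup (Fin (n + 2)) ℝ)
    (hg : ∀ u : Fin (n + 2) → ℝ, InR2 u →
      InR2 (Matrix.mulVec (g : Matrix (Fin (n + 2)) (Fin (n + 2)) ℝ) u))
    (u : Fin (n + 2) → ℝ) (hu : InR2 u) :
    InR2 (Matrix.mulVec ((g⁻¹ : Matrix.SpecialLinearGroup (Fin (n + 2)) ℝ) :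
      Matrix (Fin (n + 2)) (Fin (n + 2)) ℝ) u) := by
  have hgg : ((g⁻¹ : Matrix.SpecialLinearGroup (Fin (n + 2)) ℝ) :
      Matrix (Fin (n + 2)) (Fin (n + 2)) ℝ) * (g : Matrix (Fin (n + 2)) (Fin (n + 2)) ℝ) = 1 := by
    rw [← Matrix.SpecialLinearGroup.coe_mul, inv_mul_cancel, Matrix.SpecialLinearGroup.coe_one]
  have hgg' : (g : Matrix (Fin (n + 2)) (Fin (n + 2)) ℝ) *
      ((g⁻¹ : Matrix.SpecialLinearGroup (Fin (n + 2)) ℝ) :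
        Matrix (Fin (n + 2)) (Fin (n + 2)) ℝ) = 1 := by
    rw [← Matrix.SpecialLinearGroup.coe_mul, mul_inv_cancel, Matrix.SpecialLinearGroup.coe_one]
  set e : (Fin (n+2) → ℝ) ≃ₗ[ℝ] (Fin (n+2) → ℝ) :=
    LinearEquiv.ofLinear
      (Matrix.mulVecLin (g : Matrix (Fin (n + 2)) (Fin (n + 2)) ℝ))
      (Matrix.mulVecLin ((g⁻¹ : Matrix.SpecialLinearGroup (Fin (n + 2)) ℝ) :
        Matrix (Fin (n + 2)) (Fin (n + 2)) ℝ))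
      (by rw [← Matrix.mulVecLin_mul, hgg', Matrix.mulVecLin_one])
      (by rw [← Matrix.mulVecLin_mul, hgg, Matrix.mulVecLin_one]) with he
  have hle : (R2sub n).map (e : (Fin (n+2) → ℝ) →ₗ[ℝ] (Fin (n+2) → ℝ)) ≤ R2sub n := by
    rintro _ ⟨x, hx, rfl⟩
    exact hg x hx
  have heq : (R2sub n).map (e : (Fin (n+2) → ℝ) →ₗ[ℝ] (Fin (n+2) → ℝ)) = R2sub n :=
    Submodule.eq_of_le_of_finrank_le hle (le_of_eq (LinearEquiv.finrank_map_eq e (R2sub n)).symm)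
  have hu' : u ∈ (R2sub n).map (e : (Fin (n+2) → ℝ) →ₗ[ℝ] (Fin (n+2) → ℝ)) := by rw [heq]; exact hu
  obtain ⟨x, hx, hxu⟩ := hu'
  have : Matrix.mulVec ((g⁻¹ : Matrix.SpecialLinearGroup (Fin (n + 2)) ℝ) :
      Matrix (Fin (n + 2)) (Fin (n + 2)) ℝ) u = x := by
    rw [← hxu]
    show Matrix.mulVec _ (Matrix.mulVec _ x) = x
    rw [Matrix.mulVec_mulVec, hgg, Matrix.one_mulVec]
  rw [this]
  exact hx

end ParabolicAux

open ParabolicAux Matrix in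
/-- The orbits of the natural action on `ℝ^{n+2}` of the parabolic subgroup
`P ⊆ SL(n+2,ℝ)` of matrices preserving `ℝ² ⊆ ℝ^{n+2}` are exactly `{0}`, `ℝ² \ {0}` and
`{(v,w) ∈ ℝ² ⊕ ℝⁿ : w ≠ 0}`: two vectors lie in the same `P`-orbit iff they lie in the same
one of these three sets. -/
theorem parabolic_orbits (n : ℕ) (hn : 1 ≤ n) :
    ∀ v w : Fin (n + 2) → ℝ,
      (∃ g : Matrix.SpecialLinearGroup (Fin (n + 2)) ℝ,
          (∀ u : Fin (n + 2) → ℝ, InR2 u →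
            InR2 (Matrix.mulVec (g : Matrix (Fin (n + 2)) (Fin (n + 2)) ℝ) u)) ∧
          Matrix.mulVec (g : Matrix (Fin (n + 2)) (Fin (n + 2)) ℝ) v = w)
        ↔ ((v = 0 ∧ w = 0)
            ∨ ((v ≠ 0 ∧ InR2 v) ∧ (w ≠ 0 ∧ InR2 w))
            ∨ (¬ InR2 v ∧ ¬ InR2 w)) := by
  intro v w
  constructor
  · rintro ⟨g, hgP, rfl⟩
    have hback : Matrix.mulVec ((g⁻¹ : Matrix.SpecialLinearGroup (Fin (n + 2)) ℝ) :
        Matrix (Fin (n + 2)) (Fin (n + 2)) ℝ)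
        (Matrix.mulVec (g : Matrix (Fin (n + 2)) (Fin (n + 2)) ℝ) v) = v := by
      rw [Matrix.mulVec_mulVec, ← Matrix.SpecialLinearGroup.coe_mul, inv_mul_cancel,
        Matrix.SpecialLinearGroup.coe_one, Matrix.one_mulVec]
    by_cases hv0 : v = 0
    · left
      exact ⟨hv0, by rw [hv0, Matrix.mulVec_zero]⟩
    · have hw0 : Matrix.mulVec (g : Matrix (Fin (n + 2)) (Fin (n + 2)) ℝ) v ≠ 0 := by
        intro h
        apply hv0
        rw [← hback, h, Matrix.mulVec_zero]
      by_cases hvR : InR2 v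
      · right; left
        exact ⟨⟨hv0, hvR⟩, hw0, hgP v hvR⟩
      · right; right
        refine ⟨hvR, fun hw => hvR ?_⟩
        have := inv_mem_P g hgP _ hw
        rwa [hback] at this
  · rintro (⟨rfl, rfl⟩ | ⟨⟨hv0, hvR⟩, hw0, hwR⟩ | ⟨hvR, hwR⟩)
    · exact ⟨1, by
        intro u hu
        rwa [Matrix.SpecialLinearGroup.coe_one, Matrix.one_mulVec],
        by rw [Matrix.SpecialLinearGroup.coe_one, Matrix.one_mulVec]⟩
    · -- both nonzero in ℝ²
      have hyv : v ∘ emb n ∘ Sum.inl ≠ 0 := fun h =>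
        hv0 (eq_zero_of_parts h ((inR2_iff v).mp hvR))
      have hyw : w ∘ emb n ∘ Sum.inl ≠ 0 := fun h =>
        hw0 (eq_zero_of_parts h ((inR2_iff w).mp hwR))
      obtain ⟨A, hAu, hA⟩ := exists_isUnit_mulVec hyv hyw
      set D : Matrix (Fin n) (Fin n) ℝ :=
        Matrix.diagonal (fun k => if k = (⟨0, hn⟩ : Fin n) then (A.det)⁻¹ else 1) with hD
      have hDdet : D.det = (A.det)⁻¹ := by
        rw [hD, Matrix.det_diagonal]
        simp [Finset.prod_ite_eq']
      refine ⟨⟨gMat A 0 D, ?_⟩, ?_, ?_⟩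
      · rw [det_gMat, hDdet, mul_inv_cancel₀ hAu.ne_zero]
      · exact fun u hu => gMat_mem_P A 0 D u hu
      · apply funext_emb
        rintro (j | k)
        · rw [show ((⟨gMat A 0 D, _⟩ : Matrix.SpecialLinearGroup (Fin (n+2)) ℝ) :
            Matrix (Fin (n+2)) (Fin (n+2)) ℝ) = gMat A 0 D from rfl, mulVec_gMat_apply]
          simp only [Sum.elim_inl, Pi.add_apply, Matrix.zero_mulVec, Pi.zero_apply, add_zero]
          exact congrFun hA j
        · rw [show ((⟨gMat A 0 D, _⟩ : Matrix.SpecialLinearGroup (Fin (n+2)) ℝ) :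
            Matrix (Fin (n+2)) (Fin (n+2)) ℝ) = gMat A 0 D from rfl, mulVec_gMat_apply]
          simp only [Sum.elim_inr]
          rw [(inR2_iff v).mp hvR, Matrix.mulVec_zero, Pi.zero_apply]
          exact (congrFun ((inR2_iff w).mp hwR) k).symm
    · -- both outside ℝ²
      have hyv : v ∘ emb n ∘ Sum.inr ≠ 0 := fun h => hvR ((inR2_iff v).mpr h)
      have hyw : w ∘ emb n ∘ Sum.inr ≠ 0 := fun h => hwR ((inR2_iff w).mpr h)
      obtain ⟨B, hBu, hB⟩ := exists_isUnit_mulVec hyv hyw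
      set A : Matrix (Fin 2) (Fin 2) ℝ :=
        Matrix.diagonal (fun j => if j = (0 : Fin 2) then (B.det)⁻¹ else 1) with hA
      have hAdet : A.det = (B.det)⁻¹ := by
        rw [hA, Matrix.det_diagonal]
        simp [Finset.prod_ite_eq']
      obtain ⟨C, hC⟩ := exists_mulVec_eq hyv
        ((w ∘ emb n ∘ Sum.inl) - A.mulVec (v ∘ emb n ∘ Sum.inl))
      refine ⟨⟨gMat A C B, ?_⟩, ?_, ?_⟩
      · rw [det_gMat, hAdet, inv_mul_cancel₀ hBu.ne_zero]
      · exact fun u hu => gMat_mem_P A C B u hu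
      · apply funext_emb
        rintro (j | k)
        · rw [show ((⟨gMat A C B, _⟩ : Matrix.SpecialLinearGroup (Fin (n+2)) ℝ) :
            Matrix (Fin (n+2)) (Fin (n+2)) ℝ) = gMat A C B from rfl, mulVec_gMat_apply]
          simp only [Sum.elim_inl, Pi.add_apply]
          rw [hC]
          simp
        · rw [show ((⟨gMat A C B, _⟩ : Matrix.SpecialLinearGroup (Fin (n+2)) ℝ) :
            Matrix (Fin (n+2)) (Fin (n+2)) ℝ) = gMat A C B from rfl, mulVec_gMat_apply]
          simp only [Sum.elim_inr]
          exact congrFun hB k
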